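/- arXiv:cs/0301001 — 6 statements merged into one kernel-verified Lean document; each statement's English description precedes it below -/
import Mathlib

section
/- For any finite nonempty family of points p_1,…,p_n in ℝ², the sum of squared distances Σ_{i=1}^n dist(p_i, S)² attains its minimum over the class of sets S that are either circles (spheres in ℝ² of positive radius) or affine lines in ℝ²; that is, there exists such a set S₀ with Σ_i dist(p_i, S₀)² ≤ Σ_i dist(p_i, S)² for every circle or line S. -/
/-- Points of the Euclidean plane. -/
abbrev E2 : Type := EuclideanSpace ℝ (Fin 2)

/-- A subset of the plane which is either a circle (a sphere of positive radius)
or an affine line. -/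
def IsCircleOrLine (S : Set E2) : Prop :=
  (∃ (c : E2) (R : ℝ), 0 < R ∧ S = Metric.sphere c R) ∨
  (∃ p v : E2, v ≠ 0 ∧ S = {q : E2 | ∃ t : ℝ, q = p + t • v})

/-!
A line with unit normal `u` and offset `d` costs `∑ i, (⟪u, p i⟫ - d) ^ 2`; for fixed `u` the best
`d` is the mean, and the unit circle is compact, so some line `L₀` is optimal among lines. Likewise
the best circle centred at `c` has the mean of the `dist (p i) c` as radius, which makes its cost a
continuous function of `c`. Far from the points a circle is almost a line:
`dist x c = ‖c‖ - ⟪‖c‖⁻¹ • c, x⟫ + O(‖c‖⁻¹)`, so circles with large centres cost at least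
`cost L₀ - o(1)`. Hence either no circle beats `L₀`, or the circle cost has a global minimum,
attained with a positive radius because otherwise all points coincide and `L₀` would cost `0`.
-/

open Metric Filter Topology Module Bornology
open scoped RealInnerProductSpace

lemma sum_sq_sub_mean_le {ι : Type*} [Fintype ι] (t : ι → ℝ) (s : ℝ) :
    ∑ i, (t i - (∑ j, t j) / Fintype.card ι) ^ 2 ≤ ∑ i, (t i - s) ^ 2 := by
  rcases isEmpty_or_nonempty ι with _ | _
  · simp
  set m := (∑ j, t j) / Fintype.card ι
  have hcentred : ∑ i, (t i - m) = 0 := by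
    simp only [Finset.sum_sub_distrib, Finset.sum_const, Finset.card_univ, nsmul_eq_mul, m]
    field_simp
    ring
  have hsplit : ∑ i, (t i - s) ^ 2
      = ∑ i, (t i - m) ^ 2 + 2 * (m - s) * ∑ i, (t i - m) + ∑ _i : ι, (m - s) ^ 2 := by
    rw [Finset.mul_sum, ← Finset.sum_add_distrib, ← Finset.sum_add_distrib]
    exact Finset.sum_congr rfl fun i _ => by ring
  rw [hsplit, hcentred, mul_zero, add_zero]
  exact le_add_of_nonneg_right (by positivity)

lemma sqrt_sum_sq_add_le {ι : Type*} [Fintype ι] (f g : ι → ℝ) :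
    √(∑ i, (f i + g i) ^ 2) ≤ √(∑ i, f i ^ 2) + √(∑ i, g i ^ 2) := by
  have hnorm (h : ι → ℝ) : √(∑ i, h i ^ 2) = ‖WithLp.toLp 2 h‖ := by
    simp [EuclideanSpace.norm_eq]
  change √(∑ i, (f + g) i ^ 2) ≤ _
  rw [hnorm, hnorm, hnorm, WithLp.toLp_add]
  exact norm_add_le _ _

section RadialVariance

variable {ι α : Type*} [Fintype ι] [PseudoMetricSpace α]

noncomputable def radialVariance (p : ι → α) (c : α) : ℝ :=
  ∑ i, (dist (p i) c - (∑ j, dist (p j) c) / Fintype.card ι) ^ 2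

lemma radialVariance_nonneg (p : ι → α) (c : α) : 0 ≤ radialVariance p c :=
  Finset.sum_nonneg fun _ _ => sq_nonneg _

lemma continuous_radialVariance (p : ι → α) : Continuous (radialVariance p) := by
  unfold radialVariance
  fun_prop

end RadialVariance

section NormedSpace

variable {E : Type*} [NormedAddCommGroup E] [NormedSpace ℝ E] [Nontrivial E]

lemma infDist_sphere (x c : E) {R : ℝ} (hR : 0 < R) :
    infDist x (sphere c R) = |dist x c - R| := by
  obtain ⟨w, hw, hxc⟩ : ∃ w : E, ‖w‖ = 1 ∧ x - c = ‖x - c‖ • w := by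
    rcases eq_or_ne x c with rfl | hxc
    · obtain ⟨w, hw⟩ := exists_norm_eq E zero_le_one
      exact ⟨w, hw, by simp⟩
    · refine ⟨‖x - c‖⁻¹ • (x - c), norm_smul_inv_norm (sub_ne_zero.2 hxc), ?_⟩
      rw [smul_inv_smul₀ (norm_ne_zero_iff.2 (sub_ne_zero.2 hxc))]
  have hmem : c + R • w ∈ sphere c R := by simp [norm_smul, hw, hR.le]
  refine le_antisymm ?_ ((le_infDist ⟨_, hmem⟩).2 fun y hy => ?_)
  · calc infDist x (sphere c R) ≤ dist x (c + R • w) := infDist_le_dist_of_mem hmem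
      _ = |dist x c - R| := by
        rw [dist_eq_norm x, sub_add_eq_sub_sub, hxc, ← sub_smul, norm_smul, hw, mul_one,
          Real.norm_eq_abs, dist_eq_norm]
  · rw [mem_sphere] at hy
    rw [← hy]
    exact abs_dist_sub_le x y c

lemma radialVariance_le_sum_infDist_sphere_sq {ι : Type*} [Fintype ι] (p : ι → E) (c : E) {R : ℝ}
    (hR : 0 < R) : radialVariance p c ≤ ∑ i, infDist (p i) (sphere c R) ^ 2 := by
  simpa only [radialVariance, infDist_sphere _ _ hR, sq_abs] using
    sum_sq_sub_mean_le (fun i => dist (p i) c) R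

end NormedSpace

section InnerProductSpace

variable {ι E : Type*} [Fintype ι] [NormedAddCommGroup E] [InnerProductSpace ℝ E]

lemma exists_forall_sum_sq_inner_sub_le [FiniteDimensional ℝ E] [Nontrivial E] (p : ι → E) :
    ∃ u₀ : E, ‖u₀‖ = 1 ∧ ∃ d₀ : ℝ, ∀ u : E, ‖u‖ = 1 → ∀ d : ℝ,
      ∑ i, (⟪u₀, p i⟫ - d₀) ^ 2 ≤ ∑ i, (⟪u, p i⟫ - d) ^ 2 := by
  let V : E → ℝ := fun u => ∑ i, (⟪u, p i⟫ - (∑ j, ⟪u, p j⟫) / Fintype.card ι) ^ 2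
  have hV : Continuous V := by fun_prop
  obtain ⟨u₀, hu₀, hmin⟩ := (isCompact_sphere (0 : E) 1).exists_isMinOn
    (NormedSpace.sphere_nonempty.2 zero_le_one) hV.continuousOn
  exact ⟨u₀, by simpa using hu₀, _, fun u hu d =>
    (hmin (by simpa using hu)).trans (sum_sq_sub_mean_le _ d)⟩

lemma abs_dist_sub_norm_add_inner_le {x c : E} (hc : 2 * ‖x‖ < ‖c‖) :
    |dist x c - (‖c‖ - ⟪‖c‖⁻¹ • c, x⟫)| ≤ ‖x‖ ^ 2 / ‖c‖ := by
  have hc0 : 0 < ‖c‖ := by linarith [norm_nonneg x]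
  set t := ⟪‖c‖⁻¹ • c, x⟫
  have ht : |t| ≤ ‖x‖ := by
    have hu : ‖‖c‖⁻¹ • c‖ = 1 := norm_smul_inv_norm (norm_pos_iff.1 hc0)
    simpa [hu] using abs_real_inner_le_norm (‖c‖⁻¹ • c) x
  have hct : ⟪c, x⟫ = ‖c‖ * t := by
    simp only [t, real_inner_smul_left]
    field_simp
  have hdist : dist x c ^ 2 = (‖c‖ - t) ^ 2 + (‖x‖ ^ 2 - t ^ 2) := by
    rw [dist_eq_norm, norm_sub_sq_real, real_inner_comm, hct]
    ring
  have hts := abs_le.1 ht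
  have ht2 : t ^ 2 ≤ ‖x‖ ^ 2 := sq_le_sq' hts.1 hts.2
  have hlow : ‖c‖ - t ≤ dist x c := by
    nlinarith [dist_nonneg (x := x) (y := c)]
  rw [abs_of_nonneg (sub_nonneg.2 hlow), le_div_iff₀ hc0]
  nlinarith

lemma tendsto_dist_sub_norm_add_inner (x : E) :
    Tendsto (fun c : E => dist x c - (‖c‖ - ⟪‖c‖⁻¹ • c, x⟫)) (cobounded E) (𝓝 0) := by
  refine squeeze_zero_norm' ?_ (tendsto_norm_cobounded_atTop.const_div_atTop (‖x‖ ^ 2))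
  filter_upwards [tendsto_norm_cobounded_atTop.eventually_gt_atTop (2 * ‖x‖)] with c hc
  exact abs_dist_sub_norm_add_inner_le hc

lemma eventually_sqrt_sum_sq_inner_sub_le (p : ι → E) {ε : ℝ} (hε : 0 < ε) :
    ∀ᶠ c in cobounded E, ∀ R : ℝ, ∃ u : E, ‖u‖ = 1 ∧ ∃ d : ℝ,
      √(∑ i, (⟪u, p i⟫ - d) ^ 2) ≤ √(∑ i, (dist (p i) c - R) ^ 2) + ε := by
  let e (c : E) (i : ι) : ℝ := dist (p i) c - (‖c‖ - ⟪‖c‖⁻¹ • c, p i⟫)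
  have he : Tendsto (fun c => √(∑ i, e c i ^ 2)) (cobounded E) (𝓝 0) := by
    simpa using (tendsto_finsetSum _ fun i _ => (tendsto_dist_sub_norm_add_inner (p i)).pow 2).sqrt
  filter_upwards [he.eventually (gt_mem_nhds hε),
    tendsto_norm_cobounded_atTop.eventually_gt_atTop 0] with c hec hc R
  refine ⟨‖c‖⁻¹ • c, norm_smul_inv_norm (norm_pos_iff.1 hc), ‖c‖ - R, ?_⟩
  calc √(∑ i, (⟪‖c‖⁻¹ • c, p i⟫ - (‖c‖ - R)) ^ 2)
      = √(∑ i, (-(dist (p i) c - R) + e c i) ^ 2) := by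
        congr 1
        exact Finset.sum_congr rfl fun i _ => by ring
    _ ≤ √(∑ i, (-(dist (p i) c - R)) ^ 2) + √(∑ i, e c i ^ 2) := sqrt_sum_sq_add_le _ _
    _ ≤ √(∑ i, (dist (p i) c - R) ^ 2) + ε := by simp only [neg_sq]; linarith

lemma exists_sphere_forall_sum_infDist_sq_le [Nontrivial E] [ProperSpace E] (p : ι → E) {m : ℝ}
    (hm : ∀ u : E, ‖u‖ = 1 → ∀ d : ℝ, m ≤ ∑ i, (⟪u, p i⟫ - d) ^ 2)
    {c₀ : E} {R₀ : ℝ} (hR₀ : 0 < R₀) (h₀ : ∑ i, infDist (p i) (sphere c₀ R₀) ^ 2 < m) :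
    ∃ c r, 0 < r ∧ ∑ i, infDist (p i) (sphere c r) ^ 2 < m ∧ ∀ c' R, 0 < R →
      ∑ i, infDist (p i) (sphere c r) ^ 2 ≤ ∑ i, infDist (p i) (sphere c' R) ^ 2 := by
  have hF₀ : radialVariance p c₀ < m :=
    (radialVariance_le_sum_infDist_sphere_sq p c₀ hR₀).trans_lt h₀
  have hfar : ∀ᶠ c in cocompact E, radialVariance p c₀ ≤ radialVariance p c := by
    rw [← cobounded_eq_cocompact]
    filter_upwards [eventually_sqrt_sum_sq_inner_sub_le p
      (sub_pos.2 (Real.sqrt_lt_sqrt (radialVariance_nonneg p c₀) hF₀))] with c hc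
    obtain ⟨u, hu, d, hle⟩ := hc ((∑ j, dist (p j) c) / Fintype.card ι)
    change _ ≤ √(radialVariance p c) + _ at hle
    have hm_sqrt := Real.sqrt_le_sqrt (hm u hu d)
    rw [← Real.sqrt_le_sqrt_iff (radialVariance_nonneg p c)]
    linarith
  obtain ⟨c, hc⟩ := (continuous_radialVariance p).exists_forall_le' c₀ hfar
  set r := (∑ j, dist (p j) c) / Fintype.card ι
  have hr : 0 < r := by
    obtain ⟨i, hi⟩ : ∃ i, p i ≠ c := by
      by_contra! hall
      obtain ⟨u, hu⟩ := exists_norm_eq E zero_le_one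
      have hm_nonpos : m ≤ 0 := by simpa [hall] using hm u hu ⟪u, c⟫
      linarith [radialVariance_nonneg p c₀]
    have : Nonempty ι := ⟨i⟩
    exact div_pos (Finset.sum_pos' (fun j _ => dist_nonneg) ⟨i, Finset.mem_univ i, dist_pos.2 hi⟩)
      (by positivity)
  have hcost : ∑ i, infDist (p i) (sphere c r) ^ 2 = radialVariance p c := by
    simp only [infDist_sphere _ _ hr, sq_abs, radialVariance, r]
  refine ⟨c, r, hr, ?_, fun c' R hR => ?_⟩
  · rw [hcost]; exact (hc c₀).trans_lt hF₀
  · rw [hcost]; exact (hc c').trans (radialVariance_le_sum_infDist_sphere_sq p c' hR)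

end InnerProductSpace

section Plane

variable {E : Type*} [NormedAddCommGroup E] [InnerProductSpace ℝ E] [Fact (finrank ℝ E = 2)]

lemma Orientation.infDist_line (o : Orientation ℝ E (Fin 2)) (x a : E) {v : E} (hv : v ≠ 0) :
    infDist x {q | ∃ t : ℝ, q = a + t • v} = |o.areaForm v (x - a)| / ‖v‖ := by
  have hv0 : 0 < ‖v‖ := norm_pos_iff.2 hv
  have hv2 : ‖v‖ ^ 2 ≠ 0 := pow_ne_zero 2 hv0.ne'
  have hdecomp :
      ‖v‖ ^ 2 • (x - a) = ⟪v, x - a⟫ • v + o.areaForm v (x - a) • o.rightAngleRotation v := by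
    refine ext_inner_right ℝ fun y => ?_
    rw [inner_add_left, real_inner_smul_left, real_inner_smul_left, real_inner_smul_left,
      o.inner_rightAngleRotation_left]
    linarith [o.inner_mul_inner_add_areaForm_mul_areaForm v (x - a) y]
  have hfoot : x - (a + (⟪v, x - a⟫ / ‖v‖ ^ 2) • v)
      = (o.areaForm v (x - a) / ‖v‖ ^ 2) • o.rightAngleRotation v := by
    apply smul_right_injective E hv2
    dsimp only
    rw [sub_add_eq_sub_sub, smul_sub, hdecomp, smul_smul, smul_smul, mul_div_cancel₀ _ hv2,
      mul_div_cancel₀ _ hv2]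
    abel
  refine le_antisymm ?_ ((le_infDist (s := {q | ∃ t : ℝ, q = a + t • v}) ⟨a, 0, by simp⟩).2 ?_)
  · calc infDist x {q | ∃ t : ℝ, q = a + t • v}
        ≤ dist x (a + (⟪v, x - a⟫ / ‖v‖ ^ 2) • v) := infDist_le_dist_of_mem ⟨_, rfl⟩
      _ = |o.areaForm v (x - a)| / ‖v‖ := by
        rw [dist_eq_norm, hfoot, norm_smul, LinearIsometryEquiv.norm_map, Real.norm_eq_abs,
          abs_div, abs_of_pos (by positivity : (0:ℝ) < ‖v‖ ^ 2)]
        field_simp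
  · rintro _ ⟨t, rfl⟩
    rw [div_le_iff₀ hv0]
    have harea : o.areaForm v (x - a) = ⟪o.rightAngleRotation v, x - (a + t • v)⟫ := by
      rw [o.inner_rightAngleRotation_left, sub_add_eq_sub_sub, map_sub (o.areaForm v) (x - a),
        map_smul, o.areaForm_apply_self, smul_zero, sub_zero]
    calc |o.areaForm v (x - a)| = |⟪o.rightAngleRotation v, x - (a + t • v)⟫| := by rw [harea]
      _ ≤ ‖o.rightAngleRotation v‖ * ‖x - (a + t • v)‖ := abs_real_inner_le_norm _ _
      _ = dist x (a + t • v) * ‖v‖ := by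
        rw [LinearIsometryEquiv.norm_map, dist_eq_norm, mul_comm]

attribute [local instance] FiniteDimensional.of_fact_finrank_eq_two

lemma exists_infDist_line_eq (a : E) {v : E} (hv : v ≠ 0) :
    ∃ u : E, ‖u‖ = 1 ∧ ∃ d : ℝ, ∀ x, infDist x {q | ∃ t : ℝ, q = a + t • v} = |⟪u, x⟫ - d| := by
  let o : Orientation ℝ E (Fin 2) := (finBasisOfFinrankEq ℝ E Fact.out).orientation
  set u := ‖v‖⁻¹ • o.rightAngleRotation v
  refine ⟨u, ?_, ⟪u, a⟫, fun x => ?_⟩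
  · rw [norm_smul, LinearIsometryEquiv.norm_map, norm_inv, norm_norm,
      inv_mul_cancel₀ (norm_ne_zero_iff.2 hv)]
  · rw [o.infDist_line x a hv, ← inner_sub_right, real_inner_smul_left,
      o.inner_rightAngleRotation_left, abs_mul, abs_inv, abs_norm, inv_mul_eq_div]

lemma exists_line_infDist_eq {u : E} (hu : ‖u‖ = 1) (d : ℝ) :
    ∃ a v : E, v ≠ 0 ∧ ∀ x, infDist x {q | ∃ t : ℝ, q = a + t • v} = |⟪u, x⟫ - d| := by
  let o : Orientation ℝ E (Fin 2) := (finBasisOfFinrankEq ℝ E Fact.out).orientation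
  have hJu : ‖o.rightAngleRotation u‖ = 1 := by rw [LinearIsometryEquiv.norm_map, hu]
  have hJu0 : o.rightAngleRotation u ≠ 0 := norm_ne_zero_iff.1 (by rw [hJu]; exact one_ne_zero)
  refine ⟨d • u, o.rightAngleRotation u, hJu0, fun x => ?_⟩
  rw [o.infDist_line x _ hJu0, hJu, div_one,
    o.areaForm_rightAngleRotation_left, abs_neg, inner_sub_right, real_inner_smul_right,
    real_inner_self_eq_norm_sq, hu, one_pow, mul_one]

end Plane

instance : Fact (finrank ℝ E2 = 2) := ⟨finrank_euclideanSpace_fin⟩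

theorem stmt_1_general (n : ℕ) (p : Fin n → E2) :
    ∃ S₀ : Set E2, IsCircleOrLine S₀ ∧
      ∀ S : Set E2, IsCircleOrLine S →
        ∑ i, (Metric.infDist (p i) S₀) ^ 2 ≤ ∑ i, (Metric.infDist (p i) S) ^ 2 := by
  obtain ⟨u₀, hu₀, d₀, hmin⟩ := exists_forall_sum_sq_inner_sub_le p
  obtain ⟨a₀, v₀, hv₀, hL₀⟩ := exists_line_infDist_eq hu₀ d₀
  set L₀ := {q : E2 | ∃ t : ℝ, q = a₀ + t • v₀}
  have hL₀cost : ∑ i, infDist (p i) L₀ ^ 2 = ∑ i, (⟪u₀, p i⟫ - d₀) ^ 2 := by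
    simp only [hL₀, sq_abs]
  have hline (a v : E2) (hv : v ≠ 0) :
      ∑ i, infDist (p i) L₀ ^ 2 ≤ ∑ i, infDist (p i) {q : E2 | ∃ t : ℝ, q = a + t • v} ^ 2 := by
    obtain ⟨u, hu, d, h⟩ := exists_infDist_line_eq a hv
    simpa only [hL₀cost, h, sq_abs] using hmin u hu d
  by_cases hcircle :
      ∃ c R, 0 < R ∧ ∑ i, infDist (p i) (sphere c R) ^ 2 < ∑ i, infDist (p i) L₀ ^ 2
  · obtain ⟨c₀, R₀, hR₀, h₀⟩ := hcircle
    obtain ⟨c, r, hr, hlt, hle⟩ :=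
      exists_sphere_forall_sum_infDist_sq_le p (fun u hu d => hL₀cost ▸ hmin u hu d) hR₀ h₀
    refine ⟨sphere c r, Or.inl ⟨c, r, hr, rfl⟩, ?_⟩
    rintro S (⟨c', R, hR, rfl⟩ | ⟨a, v, hv, rfl⟩)
    exacts [hle c' R hR, hlt.le.trans (hline a v hv)]
  · push Not at hcircle
    refine ⟨L₀, Or.inr ⟨a₀, v₀, hv₀, rfl⟩, ?_⟩
    rintro S (⟨c, R, hR, rfl⟩ | ⟨a, v, hv, rfl⟩)
    exacts [hcircle c R hR, hline a v hv]

/-- For any finite nonempty family of points in ℝ², the sum of squared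
distances to `S` attains its minimum over the class of sets `S` that are circles or
affine lines. -/
theorem stmt_1 (n : ℕ) (hn : 1 ≤ n) (p : Fin n → E2) :
    ∃ S₀ : Set E2, IsCircleOrLine S₀ ∧
      ∀ S : Set E2, IsCircleOrLine S →
        ∑ i, (Metric.infDist (p i) S₀) ^ 2 ≤ ∑ i, (Metric.infDist (p i) S) ^ 2 :=
  stmt_1_general n p
end

section
/- Let p_1,…,p_n, n ≥ 3, be distinct points in ℝ² all lying on one affine line. Then for every circle S (center c ∈ ℝ², radius R > 0) the sum Σ_{i=1}^n (‖p_i − c‖ − R)² is strictly positive, yet the infimum of this sum over all circles equals 0; hence the minimum over circles is not attained. -/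
open Filter Topology Module EuclideanGeometry Set InnerProductSpace

section CircleObjective

variable {V : Type*} [NormedAddCommGroup V] {ι : Type*} [Fintype ι]

def circleObjective (p : ι → V) (c : V) (R : ℝ) : ℝ :=
  ∑ i, (‖p i - c‖ - R) ^ 2

theorem circleObjective_nonneg (p : ι → V) (c : V) (R : ℝ) : 0 ≤ circleObjective p c R :=
  Finset.sum_nonneg fun _ _ => sq_nonneg _

theorem circleObjective_eq_zero_iff {p : ι → V} {c : V} {R : ℝ} :
    circleObjective p c R = 0 ↔ ∀ i, ‖p i - c‖ = R := by
  simp only [circleObjective, Finset.sum_eq_zero_iff_of_nonneg fun _ _ => sq_nonneg _,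
    Finset.mem_univ, true_implies, sq_eq_zero_iff, sub_eq_zero]

variable [InnerProductSpace ℝ V]

theorem circleObjective_pos_of_collinear {p : ι → V} (hp : Function.Injective p)
    (hcard : 2 < Fintype.card ι) (hline : Collinear ℝ (range p)) (c : V) (R : ℝ) :
    0 < circleObjective p c R := by
  refine (circleObjective_nonneg p c R).lt_of_ne fun h => ?_
  have hcos : Cospherical (range p) :=
    ⟨c, R, forall_mem_range.2 fun i => by
      rw [dist_eq_norm]; exact circleObjective_eq_zero_iff.1 h.symm i⟩
  obtain ⟨i, j, k, hij, hik, hjk⟩ := Fintype.two_lt_card_iff.1 hcard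
  refine affineIndependent_iff_not_collinear_set.1
    (hcos.affineIndependent_of_mem_of_ne (mem_range_self i) (mem_range_self j)
      (mem_range_self k) (hp.ne hij) (hp.ne hik) (hp.ne hjk)) (hline.subset ?_)
  simp [insert_subset_iff]

theorem exists_norm_eq_one_mem_orthogonal_vectorSpan [FiniteDimensional ℝ V]
    (hV : 2 ≤ finrank ℝ V) {s : Set V} (hs : Collinear ℝ s) :
    ∃ w : V, ‖w‖ = 1 ∧ w ∈ (vectorSpan ℝ s)ᗮ := by
  have hrank : 1 ≤ finrank ℝ (vectorSpan ℝ s)ᗮ := by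
    have := (vectorSpan ℝ s).finrank_add_finrank_orthogonal
    have := hs.finrank_le_one
    omega
  obtain ⟨w, hw, hw0⟩ := Submodule.exists_mem_ne_zero_of_ne_bot
    (Submodule.one_le_finrank_iff.1 hrank)
  exact ⟨‖w‖⁻¹ • w, norm_smul_inv_norm hw0, Submodule.smul_mem _ _ hw⟩

theorem sq_sub_le_sq_sub_sq_sq_div {s R : ℝ} (hR : 0 < R) (hRs : R ≤ s) :
    (s - R) ^ 2 ≤ (s ^ 2 - R ^ 2) ^ 2 / (4 * R ^ 2) := by
  rw [le_div_iff₀ (by positivity)]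
  have h2R : (2 * R) ^ 2 ≤ (s + R) ^ 2 := pow_le_pow_left₀ (by positivity) (by linarith) 2
  calc (s - R) ^ 2 * (4 * R ^ 2) = (s - R) ^ 2 * (2 * R) ^ 2 := by ring
    _ ≤ (s - R) ^ 2 * (s + R) ^ 2 := by gcongr
    _ = (s ^ 2 - R ^ 2) ^ 2 := by ring

theorem sq_dist_tangent_circle_le {x p₀ w : V} (hw : ‖w‖ = 1) (hx : ⟪x - p₀, w⟫_ℝ = 0)
    {R : ℝ} (hR : 0 < R) :
    (‖x - (p₀ + R • w)‖ - R) ^ 2 ≤ ‖x - p₀‖ ^ 4 / (4 * R ^ 2) := by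
  have horth : ⟪x - p₀, R • w⟫_ℝ = 0 := by rw [real_inner_smul_right, hx, mul_zero]
  have hpyth : ‖x - (p₀ + R • w)‖ ^ 2 = ‖x - p₀‖ ^ 2 + R ^ 2 := by
    rw [sub_add_eq_sub_sub, sq, sq, sq, norm_sub_sq_eq_norm_sq_add_norm_sq_real horth,
      norm_smul, hw, Real.norm_eq_abs, mul_one, abs_mul_abs_self]
  have hRle : R ≤ ‖x - (p₀ + R • w)‖ :=
    (pow_le_pow_iff_left₀ hR.le (norm_nonneg _) two_ne_zero).1 (by nlinarith [hpyth])
  calc (‖x - (p₀ + R • w)‖ - R) ^ 2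
      ≤ (‖x - (p₀ + R • w)‖ ^ 2 - R ^ 2) ^ 2 / (4 * R ^ 2) := sq_sub_le_sq_sub_sq_sq_div hR hRle
    _ = ‖x - p₀‖ ^ 4 / (4 * R ^ 2) := by rw [hpyth]; ring

theorem tendsto_circleObjective_tangent {p : ι → V} {p₀ w : V} (hw : ‖w‖ = 1)
    (hp : ∀ i, ⟪p i - p₀, w⟫_ℝ = 0) :
    Tendsto (fun R => circleObjective p (p₀ + R • w) R) atTop (𝓝 0) := by
  have hbound : Tendsto (fun R : ℝ => (∑ i, ‖p i - p₀‖ ^ 4) / (4 * R ^ 2)) atTop (𝓝 0) :=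
    tendsto_const_nhds.div_atTop ((tendsto_pow_atTop two_ne_zero).const_mul_atTop four_pos)
  refine tendsto_of_tendsto_of_tendsto_of_le_of_le' tendsto_const_nhds hbound
    (Eventually.of_forall fun R => circleObjective_nonneg _ _ _) ?_
  filter_upwards [eventually_gt_atTop 0] with R hR
  rw [circleObjective, Finset.sum_div]
  exact Finset.sum_le_sum fun i _ => sq_dist_tangent_circle_le hw (hp i) hR

theorem sInf_circleObjective_of_collinear [FiniteDimensional ℝ V] (hV : 2 ≤ finrank ℝ V)
    [Nonempty ι] {p : ι → V} (hline : Collinear ℝ (range p)) :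
    sInf {s | ∃ c R, 0 < R ∧ s = circleObjective p c R} = 0 := by
  obtain ⟨w, hw, hw_orth⟩ := exists_norm_eq_one_mem_orthogonal_vectorSpan hV hline
  obtain ⟨i₀⟩ := ‹Nonempty ι›
  have hp : ∀ i, ⟪p i - p i₀, w⟫_ℝ = 0 := fun i =>
    Submodule.inner_right_of_mem_orthogonal
      (vsub_mem_vectorSpan ℝ (mem_range_self i) (mem_range_self i₀)) hw_orth
  refine csInf_eq_of_forall_ge_of_forall_gt_exists_lt ⟨_, p i₀, 1, one_pos, rfl⟩
    (by rintro _ ⟨c, R, -, rfl⟩; exact circleObjective_nonneg p c R) fun ε hε => ?_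
  obtain ⟨R, hR, hlt⟩ := ((eventually_gt_atTop 0).and
    ((tendsto_circleObjective_tangent hw hp).eventually (gt_mem_nhds hε))).exists
  exact ⟨_, ⟨_, R, hR, rfl⟩, hlt⟩

end CircleObjective

/-- If `n ≥ 3` distinct points lie on one affine line, then every circle
(center `c`, radius `R > 0`) has strictly positive objective value
`∑ (‖pᵢ - c‖ - R)²`, yet the infimum of this objective over all circles is `0`;
hence the minimum over circles is not attained. -/
theorem stmt_2 (n : ℕ) (hn : 3 ≤ n) (p : Fin n → E2)
    (hdistinct : Function.Injective p) (hline : Collinear ℝ (Set.range p)) :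
    (∀ (c : E2) (R : ℝ), 0 < R → 0 < ∑ i, (‖p i - c‖ - R) ^ 2) ∧
    sInf {s : ℝ | ∃ (c : E2) (R : ℝ), 0 < R ∧ s = ∑ i, (‖p i - c‖ - R) ^ 2} = 0 ∧
    ¬ ∃ (c : E2) (R : ℝ), 0 < R ∧
        ∀ (c' : E2) (R' : ℝ), 0 < R' →
          (∑ i, (‖p i - c‖ - R) ^ 2) ≤ ∑ i, (‖p i - c'‖ - R') ^ 2 := by
  have hpos : ∀ c R, 0 < circleObjective p c R :=
    circleObjective_pos_of_collinear hdistinct (by rw [Fintype.card_fin]; omega) hline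
  have : Nonempty (Fin n) := ⟨⟨0, by omega⟩⟩
  have hinf := sInf_circleObjective_of_collinear (by simp) hline
  refine ⟨fun c R _ => hpos c R, hinf, ?_⟩
  rintro ⟨c, R, hR, hmin⟩
  have hle : circleObjective p c R ≤ 0 :=
    hinf ▸ le_csInf ⟨_, c, R, hR, rfl⟩ (by rintro _ ⟨c', R', hR', rfl⟩; exact hmin c' R' hR')
  exact (hpos c R).not_ge hle
end

section
/- For the data set consisting of the four points (1,0), (−1,0), (0,1), (0,−1) together with k ≥ 1 points at the origin, the circle with center (1/2, 1/2) and radius √2/2 (the circle through (0,0), (1,0), (0,1)) has objective value F = 2(3 − √5), and 2(3 − √5) < 2. -/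
/-- The circle-fitting objective function for the data set consisting of the four
points `(1,0), (-1,0), (0,1), (0,-1)` together with `k` copies of the origin:
`F(a,b,R) = ∑ᵢ (√((xᵢ-a)² + (yᵢ-b)²) - R)²`. -/
noncomputable def Fk (k : ℕ) (a b R : ℝ) : ℝ :=
  (Real.sqrt ((1 - a) ^ 2 + (0 - b) ^ 2) - R) ^ 2 +
  (Real.sqrt ((-1 - a) ^ 2 + (0 - b) ^ 2) - R) ^ 2 +
  (Real.sqrt ((0 - a) ^ 2 + (1 - b) ^ 2) - R) ^ 2 +
  (Real.sqrt ((0 - a) ^ 2 + (-1 - b) ^ 2) - R) ^ 2 +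
  k * (Real.sqrt ((0 - a) ^ 2 + (0 - b) ^ 2) - R) ^ 2

/-- For this data set (with `k ≥ 1`), the circle centered at
`(1/2, 1/2)` with radius `√2/2` (the circle through `(0,0)`, `(1,0)`, `(0,1)`)
has objective value `2(3 - √5)`, which is strictly less than `2`. -/
theorem stmt_6 (k : ℕ) (hk : 1 ≤ k) :
    Fk k (1 / 2) (1 / 2) (Real.sqrt 2 / 2) = 2 * (3 - Real.sqrt 5) ∧
    2 * (3 - Real.sqrt 5) < 2 := by
  have h2 : (Real.sqrt 2) ^ 2 = 2 := Real.sq_sqrt (by norm_num)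
  have h10 : (Real.sqrt 10) ^ 2 = 10 := Real.sq_sqrt (by norm_num)
  have h5 : (Real.sqrt 5) ^ 2 = 5 := Real.sq_sqrt (by norm_num)
  have hA : Real.sqrt (1/2 : ℝ) = Real.sqrt 2 / 2 := by
    rw [show (1/2 : ℝ) = (Real.sqrt 2 / 2) ^ 2 by nlinarith [h2]]
    exact Real.sqrt_sq (by positivity)
  have hB : Real.sqrt (10/4 : ℝ) = Real.sqrt 10 / 2 := by
    rw [show (10/4 : ℝ) = (Real.sqrt 10 / 2) ^ 2 by nlinarith [h10]]
    exact Real.sqrt_sq (by positivity)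
  have h102 : Real.sqrt 10 * Real.sqrt 2 = 2 * Real.sqrt 5 := by
    rw [← Real.sqrt_mul (by norm_num : (10:ℝ) ≥ 0) 2,
      show (10 : ℝ) * 2 = 2^2 * 5 by norm_num,
      Real.sqrt_mul (by positivity) 5, Real.sqrt_sq (by norm_num)]
  have h5lt : Real.sqrt 5 > 2 := by
    nlinarith [Real.sqrt_nonneg 5]
  constructor
  · unfold Fk
    rw [show (1 - (1/2:ℝ)) ^ 2 + (0 - (1/2:ℝ)) ^ 2 = 1/2 by norm_num,
      show (-1 - (1/2:ℝ)) ^ 2 + (0 - (1/2:ℝ)) ^ 2 = 10/4 by norm_num,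
      show (0 - (1/2:ℝ)) ^ 2 + (1 - (1/2:ℝ)) ^ 2 = 1/2 by norm_num,
      show (0 - (1/2:ℝ)) ^ 2 + (-1 - (1/2:ℝ)) ^ 2 = 10/4 by norm_num,
      show (0 - (1/2:ℝ)) ^ 2 + (0 - (1/2:ℝ)) ^ 2 = 1/2 by norm_num,
      hA, hB]
    ring_nf
    nlinarith [h2, h10, h102]
  · nlinarith [h5lt]
end

section
/- Let A ≠ 0, B, C, D be real numbers satisfying B² + C² − 4AD = 1, and set a = −B/(2A), b = −C/(2A), R = 1/(2|A|). For any point (x,y) ∈ ℝ², put P = A(x²+y²) + Bx + Cy + D and r = √((x−a)² + (y−b)²). Then P = A(r² − R²), and if r > 0 then 2P/(1 + √(1+4AP)) = sign(A)·(r − R); in particular |2P/(1 + √(1+4AP))| = |r − R| is the Euclidean distance from (x,y) to the circle of center (a,b) and radius R. -/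
/-!
Completing the square gives `P = A (r² - R²)`, since `(B² + C² - 4AD)/(4A) = 1/(4A) = A R²`.
Then `1 + 4AP = 4A²r²`, so `√(1 + 4AP) = 2|A| r` and `1 + √(1 + 4AP) = 2|A| (r + R)`;
dividing `2P = 2A (r - R)(r + R)` by it leaves `(A/|A|)(r - R) = sign(A) (r - R)`.
-/

namespace Real

theorem sign_mul_abs (x : ℝ) : sign x * |x| = x := by
  rcases lt_trichotomy x 0 with hx | rfl | hx
  · rw [sign_of_neg hx, abs_of_neg hx]; ring
  · simp
  · rw [sign_of_pos hx, abs_of_pos hx, one_mul]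

theorem abs_sign_of_ne_zero {x : ℝ} (hx : x ≠ 0) : |sign x| = 1 := by
  rcases sign_apply_eq_of_ne_zero x hx with h | h <;> simp [h]

end Real

theorem quadric_eq_complete_square {A : ℝ} (hA : A ≠ 0) (B C D x y : ℝ) :
    A * (x ^ 2 + y ^ 2) + B * x + C * y + D =
      A * ((x - -B / (2 * A)) ^ 2 + (y - -C / (2 * A)) ^ 2)
        - (B ^ 2 + C ^ 2 - 4 * A * D) / (4 * A) := by
  field_simp
  ring

theorem one_add_four_mul_power_eq_sq {A : ℝ} (hA : A ≠ 0) (r : ℝ) :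
    1 + 4 * A * (A * (r ^ 2 - (1 / (2 * |A|)) ^ 2)) = (2 * |A| * r) ^ 2 := by
  simp only [div_pow, mul_pow, sq_abs]
  field_simp
  ring

theorem two_mul_power_div_eq_sign_mul {A r : ℝ} (hA : A ≠ 0) (hr : 0 ≤ r) :
    2 * (A * (r ^ 2 - (1 / (2 * |A|)) ^ 2)) / (1 + 2 * |A| * r) =
      Real.sign A * (r - 1 / (2 * |A|)) := by
  set R := 1 / (2 * |A|)
  have hAR : 2 * |A| * R = 1 := mul_one_div_cancel (by positivity)
  rw [div_eq_iff (by positivity)]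
  linear_combination (-2 * (r ^ 2 - R ^ 2)) * Real.sign_mul_abs A + (Real.sign A * (r - R)) * hAR

/-- For `A ≠ 0`, `B² + C² - 4AD = 1`, center `(a,b) = (-B/2A, -C/2A)`
and radius `R = 1/(2|A|)`: with `P = A(x²+y²) + Bx + Cy + D` and
`r = √((x-a)² + (y-b)²)` one has `P = A(r² - R²)`, and if `r > 0` then
`2P/(1 + √(1+4AP)) = sign(A)·(r - R)`; in particular
`|2P/(1 + √(1+4AP))| = |r - R|` is the distance from `(x,y)` to the circle. -/
theorem stmt_10 (A B C D : ℝ) (hA : A ≠ 0) (hcon : B ^ 2 + C ^ 2 - 4 * A * D = 1)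
    (a b R : ℝ) (ha : a = -B / (2 * A)) (hb : b = -C / (2 * A))
    (hR : R = 1 / (2 * |A|))
    (x y : ℝ) (P : ℝ) (hP : P = A * (x ^ 2 + y ^ 2) + B * x + C * y + D)
    (r : ℝ) (hr : r = Real.sqrt ((x - a) ^ 2 + (y - b) ^ 2)) :
    P = A * (r ^ 2 - R ^ 2) ∧
    (0 < r →
      2 * P / (1 + Real.sqrt (1 + 4 * A * P)) = Real.sign A * (r - R) ∧
      |2 * P / (1 + Real.sqrt (1 + 4 * A * P))| = |r - R|) := by
  have hr0 : 0 ≤ r := hr ▸ Real.sqrt_nonneg _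
  have hpower : P = A * (r ^ 2 - R ^ 2) := by
    have hr2 : r ^ 2 = (x - a) ^ 2 + (y - b) ^ 2 := hr ▸ Real.sq_sqrt (by positivity)
    rw [hP, quadric_eq_complete_square hA, hcon, hr2, ha, hb, hR, div_pow, mul_pow, sq_abs]
    field_simp
    ring
  have hsqrt : Real.sqrt (1 + 4 * A * P) = 2 * |A| * r := by
    rw [hpower, hR, one_add_four_mul_power_eq_sq hA, Real.sqrt_sq (by positivity)]
  have hsign : 2 * P / (1 + Real.sqrt (1 + 4 * A * P)) = Real.sign A * (r - R) := by
    rw [hsqrt, hpower, hR, two_mul_power_div_eq_sign_mul hA hr0]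
  refine ⟨hpower, fun _ => ⟨hsign, ?_⟩⟩
  rw [hsign, abs_mul, Real.abs_sign_of_ne_zero hA, one_mul]
end

section
/- Let M be a symmetric positive definite 4×4 real matrix and let B be the 4×4 matrix with rows (0,0,0,−2), (0,1,0,0), (0,0,1,0), (−2,0,0,0). Then the quartic polynomial Q(η) = det(M − ηB) has four real roots counted with multiplicity, of which exactly three are positive and one is negative. -/
/-!
Simultaneous diagonalization: with `L` the symmetric square root of `M` and `L⁻¹ B L⁻¹`
diagonalized by an orthogonal matrix, there is an invertible `P` with `M = Pᵀ P` and
`B = Pᵀ diag(μ) P`. Then `det(M - ηB) = det(P)² ∏ (1 - η μᵢ)` has the roots `1 / μᵢ`, and by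
Sylvester's law of inertia the `μᵢ` have the signs of any diagonal form congruent to `B`:
three positive and one negative.
-/

/-- The matrix of the Pratt constraint `B² + C² - 4AD = 1`. -/
def prattB : Matrix (Fin 4) (Fin 4) ℝ :=
  !![0, 0, 0, -2; 0, 1, 0, 0; 0, 0, 1, 0; -2, 0, 0, 0]

open Matrix QuadraticMap

namespace Matrix
variable {n : Type*} [Fintype n] [DecidableEq n]

theorem IsSymm.exists_orthogonal_diagonal {S : Matrix n n ℝ} (hS : S.IsSymm) :
    ∃ (U : Matrix n n ℝ) (μ : n → ℝ), U * Uᵀ = 1 ∧ S = U * diagonal μ * Uᵀ := by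
  have hS' : S.IsHermitian := by rwa [IsHermitian, conjTranspose_eq_transpose_of_trivial]
  refine ⟨hS'.eigenvectorUnitary, hS'.eigenvalues, ?_, ?_⟩
  · simpa [star_eq_conjTranspose] using Unitary.mul_star_self_of_mem hS'.eigenvectorUnitary.2
  · simpa [Unitary.conjStarAlgAut_apply, star_eq_conjTranspose] using hS'.spectral_theorem

theorem PosDef.exists_simultaneous_diagonalization {M B : Matrix n n ℝ} (hM : M.PosDef)
    (hB : B.IsSymm) :
    ∃ (P : Matrix n n ℝ) (μ : n → ℝ), IsUnit P ∧ M = Pᵀ * P ∧ B = Pᵀ * diagonal μ * P := by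
  open scoped MatrixOrder in
  obtain ⟨L, hL, hLL⟩ : ∃ L : Matrix n n ℝ, Lᵀ = L ∧ L * L = M :=
    ⟨CFC.sqrt M, (CFC.sqrt_nonneg M).posSemidef.isHermitian,
      CFC.sqrt_mul_sqrt_self M hM.posSemidef.nonneg⟩
  have hLu : IsUnit L.det := (isUnit_iff_isUnit_det L).mp <|
    isUnit_of_mul_isUnit_left (hLL ▸ hM.isUnit)
  have hS : (L⁻¹ * B * L⁻¹).IsSymm := by
    rw [IsSymm, transpose_mul, transpose_mul, transpose_nonsing_inv, hL, hB.eq, mul_assoc]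
  obtain ⟨U, μ, hU, hSU⟩ := hS.exists_orthogonal_diagonal
  refine ⟨Uᵀ * L, μ, (IsUnit.of_mul_eq_one_right U hU).mul ((isUnit_iff_isUnit_det L).mpr hLu),
    ?_, ?_⟩
  · rw [transpose_mul, transpose_transpose, hL, ← hLL, mul_assoc, ← mul_assoc U, hU, one_mul]
  · calc B = L * (L⁻¹ * B * L⁻¹) * L := by
          rw [← mul_assoc, ← mul_assoc, mul_nonsing_inv _ hLu, one_mul, mul_assoc,
            nonsing_inv_mul _ hLu, mul_one]
      _ = (Uᵀ * L)ᵀ * diagonal μ * (Uᵀ * L) := by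
          rw [hSU, transpose_mul, transpose_transpose, hL]
          simp only [mul_assoc]

theorem det_transpose_mul_sub_smul_diagonal {R : Type*} [CommRing R] (P : Matrix n n R)
    (μ : n → R) (η : R) :
    (Pᵀ * P - η • (Pᵀ * diagonal μ * P)).det = P.det ^ 2 * ∏ i, (1 - η * μ i) := by
  have hcongr :
      Pᵀ * P - η • (Pᵀ * diagonal μ * P) = Pᵀ * diagonal (fun i => 1 - η * μ i) * P := by
    have hdiag : diagonal (fun i => 1 - η * μ i) = 1 - η • diagonal μ := by
      rw [← diagonal_one, ← diagonal_smul, diagonal_sub]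
      rfl
    rw [hdiag, mul_sub, sub_mul, mul_one, Matrix.mul_smul, Matrix.smul_mul]
  rw [hcongr, det_mul, det_mul, det_diagonal, det_transpose]
  ring

theorem toQuadraticForm'_transpose_mul_diagonal_mul_equivalent {R : Type*} [CommRing R]
    {P : Matrix n n R} (hP : IsUnit P) (w : n → R) :
    (Pᵀ * diagonal w * P).toQuadraticForm'.Equivalent (weightedSumSquares R w) := by
  refine ⟨{ P.toLinearEquiv' hP.invertible with map_app' := fun x => ?_ }⟩
  simp only [Matrix.toQuadraticForm', LinearMap.BilinMap.toQuadraticMap_apply,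
    toLinearMap₂'_apply', weightedSumSquares_apply, smul_eq_mul, LinearMap.toFun_eq_coe,
    toLinearEquiv'_apply, toLin'_apply]
  rw [← mulVec_mulVec, ← mulVec_mulVec, dotProduct_mulVec, vecMul_transpose]
  simp only [dotProduct, mulVec_diagonal]
  exact Finset.sum_congr rfl fun i _ => by ring

theorem ncard_pos_eq_and_ncard_neg_eq_of_congr_diagonal {𝕜 : Type*} [Field 𝕜] [LinearOrder 𝕜]
    [IsStrictOrderedRing 𝕜] {P P' : Matrix n n 𝕜} {w w' : n → 𝕜} (hP : IsUnit P)
    (hP' : IsUnit P') (h : Pᵀ * diagonal w * P = P'ᵀ * diagonal w' * P') :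
    {i | 0 < w i}.ncard = {i | 0 < w' i}.ncard ∧ {i | w i < 0}.ncard = {i | w' i < 0}.ncard := by
  have e := toQuadraticForm'_transpose_mul_diagonal_mul_equivalent hP w
  have e' := toQuadraticForm'_transpose_mul_diagonal_mul_equivalent hP' w'
  rw [h] at e
  exact ⟨(QuadraticForm.sigPos_of_equiv_weightedSumSquares e).symm.trans
      (QuadraticForm.sigPos_of_equiv_weightedSumSquares e'),
    (QuadraticForm.sigNeg_of_equiv_weightedSumSquares e).symm.trans
      (QuadraticForm.sigNeg_of_equiv_weightedSumSquares e')⟩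

end Matrix

theorem prattB_isSymm : prattB.IsSymm := by
  ext i j
  fin_cases i <;> fin_cases j <;> rfl

-- `x₁² + x₂² - 4x₀x₃ = x₁² + x₂² + (x₀ - x₃)² - (x₀ + x₃)²`
theorem exists_prattB_eq_transpose_mul_diagonal_mul :
    ∃ T : Matrix (Fin 4) (Fin 4) ℝ, IsUnit T ∧ prattB = Tᵀ * diagonal ![1, 1, 1, -1] * T := by
  let T : Matrix (Fin 4) (Fin 4) ℝ := !![0, 1, 0, 0; 0, 0, 1, 0; 1, 0, 0, -1; 1, 0, 0, 1]
  have hT : T * !![0, 0, 2⁻¹, 2⁻¹; 1, 0, 0, 0; 0, 1, 0, 0; 0, 0, -2⁻¹, 2⁻¹] = 1 := by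
    ext i j
    fin_cases i <;> fin_cases j <;> norm_num [T, mul_apply, Fin.sum_univ_succ, one_apply]
  refine ⟨T, IsUnit.of_mul_eq_one _ hT, ?_⟩
  ext i j
  fin_cases i <;> fin_cases j <;>
    norm_num [T, prattB, mul_apply, Fin.sum_univ_succ, diagonal_apply]

theorem ncard_pos_eq_three_and_ncard_neg_eq_one_of_prattB_eq {P : Matrix (Fin 4) (Fin 4) ℝ}
    {μ : Fin 4 → ℝ} (hP : IsUnit P) (h : prattB = Pᵀ * diagonal μ * P) :
    {i | 0 < μ i}.ncard = 3 ∧ {i | μ i < 0}.ncard = 1 := by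
  obtain ⟨T, hT, hBT⟩ := exists_prattB_eq_transpose_mul_diagonal_mul
  obtain ⟨hpos, hneg⟩ := ncard_pos_eq_and_ncard_neg_eq_of_congr_diagonal hP hT (h.symm.trans hBT)
  have hpos₀ : {i : Fin 4 | 0 < ![(1 : ℝ), 1, 1, -1] i} = {0, 1, 2} := by
    ext i; fin_cases i <;> norm_num [Fin.ext_iff]
  have hneg₀ : {i : Fin 4 | ![(1 : ℝ), 1, 1, -1] i < 0} = {3} := by
    ext i; fin_cases i <;> norm_num [Fin.ext_iff]
  rw [hpos, hneg, hpos₀, hneg₀]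
  exact ⟨Set.ncard_eq_three.mpr ⟨0, 1, 2, by decide, by decide, by decide, rfl⟩,
    Set.ncard_singleton 3⟩

theorem Fin.exists_perm_neg_zero_and_pos_succ {n : ℕ} {μ : Fin (n + 1) → ℝ}
    (hneg : {i | μ i < 0}.ncard = 1) (hpos : {i | 0 < μ i}.ncard = n) :
    ∃ σ : Equiv.Perm (Fin (n + 1)), μ (σ 0) < 0 ∧ ∀ k : Fin n, 0 < μ (σ k.succ) := by
  obtain ⟨i₀, hi₀⟩ := Set.ncard_eq_one.mp hneg
  have hμi₀ : μ i₀ < 0 := hi₀.symm.subset rfl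
  have hposeq : {i | 0 < μ i} = {i₀}ᶜ := by
    refine Set.eq_of_subset_of_ncard_le (fun i hi hii₀ => lt_asymm hi (hii₀ ▸ hμi₀)) ?_
    have := Set.ncard_add_ncard_compl {i₀}
    simp only [Set.ncard_singleton, Nat.card_eq_fintype_card, Fintype.card_fin] at this
    omega
  refine ⟨Equiv.swap 0 i₀, by rwa [Equiv.swap_apply_left], fun k => ?_⟩
  have hk : Equiv.swap 0 i₀ k.succ ≠ i₀ := by
    simp [Equiv.swap_apply_eq_iff, Fin.succ_ne_zero]
  exact hposeq.symm.subset hk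

theorem prod_one_sub_mul_eq {ι : Type*} [Fintype ι] (μ : ι → ℝ) (hμ : ∀ i, μ i ≠ 0) (η : ℝ) :
    ∏ i, (1 - η * μ i) = (∏ i, -μ i) * ∏ i, (η - (μ i)⁻¹) := by
  rw [← Finset.prod_mul_distrib]
  refine Finset.prod_congr rfl fun i _ => ?_
  field_simp [hμ i]
  ring

/-- For a symmetric positive definite 4×4 matrix `M`, the quartic
polynomial `Q(η) = det(M - ηB)` has four real roots counted with multiplicity,
exactly three of which are positive and one negative. -/
theorem stmt_15 (M : Matrix (Fin 4) (Fin 4) ℝ) (hM : M.PosDef) :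
    ∃ (c η₁ η₂ η₃ η₄ : ℝ), c ≠ 0 ∧ η₁ < 0 ∧ 0 < η₂ ∧ 0 < η₃ ∧ 0 < η₄ ∧
      ∀ η : ℝ, (M - η • prattB).det
        = c * (η - η₁) * (η - η₂) * (η - η₃) * (η - η₄) := by
  obtain ⟨P, μ, hP, rfl, hB⟩ := hM.exists_simultaneous_diagonalization prattB_isSymm
  obtain ⟨hpos, hneg⟩ := ncard_pos_eq_three_and_ncard_neg_eq_one_of_prattB_eq hP hB
  obtain ⟨σ, hσ₀, hσ⟩ := Fin.exists_perm_neg_zero_and_pos_succ hneg hpos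
  have hμσ : ∀ i, μ (σ i) ≠ 0 := Fin.cases hσ₀.ne fun k => (hσ k).ne'
  refine ⟨P.det ^ 2 * ∏ i, -μ (σ i), (μ (σ 0))⁻¹, (μ (σ 1))⁻¹, (μ (σ 2))⁻¹, (μ (σ 3))⁻¹,
    mul_ne_zero (pow_ne_zero 2 ((isUnit_iff_isUnit_det P).mp hP).ne_zero)
      (Finset.prod_ne_zero_iff.mpr fun i _ => neg_ne_zero.mpr (hμσ i)),
    inv_lt_zero.mpr hσ₀, inv_pos.mpr (hσ 0), inv_pos.mpr (hσ 1), inv_pos.mpr (hσ 2), fun η => ?_⟩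
  rw [hB, det_transpose_mul_sub_smul_diagonal, ← Equiv.prod_comp σ,
    prod_one_sub_mul_eq (fun i => μ (σ i)) hμσ, Fin.prod_univ_four (fun i => η - (μ (σ i))⁻¹)]
  ring
end

section
/- Let M be a symmetric positive definite 4×4 real matrix and let B be the 4×4 matrix with rows (0,0,0,−2), (0,1,0,0), (0,0,1,0), (−2,0,0,0). Then the minimum of AᵀMA over the constraint set {A ∈ ℝ⁴ : AᵀBA = 1} is attained, and its value equals the smallest positive root η* of the equation det(M − ηB) = 0; moreover, any minimizer A satisfies MA = η* BA. -/
open Matrix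

/-!
Let `v` minimize `q_M(v) = vᵀMv` on the quadric `q_B = 1` and put `η = q_M(v)`. By homogeneity
`q_M ≥ η q_B` wherever `q_B > 0`, and trivially wherever `q_B ≤ 0`, since `M` is positive
definite; so `M - ηB` is positive semidefinite. As `q_{M - ηB}(v) = 0`, the vector `v` lies in
its kernel, i.e. `Mv = ηBv` and `det(M - ηB) = 0`. Conversely, a kernel vector `w` of `M - η'B`
with `η' > 0` has `η' q_B(w) = q_M(w) > 0`, hence `q_B(w) > 0`, and semidefiniteness of
`M - ηB` at `w` gives `η ≤ η'`. A minimizer exists because `q_M` is coercive and the quadric is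
closed.
-/

open Filter

namespace Matrix

variable {n : Type*} [Fintype n]

lemma smul_dotProduct_mulVec_smul (N : Matrix n n ℝ) (c : ℝ) (v : n → ℝ) :
    c • v ⬝ᵥ N *ᵥ (c • v) = c ^ 2 * (v ⬝ᵥ N *ᵥ v) := by
  rw [mulVec_smul, smul_dotProduct, dotProduct_smul, smul_eq_mul, smul_eq_mul]
  ring

lemma continuous_dotProduct_mulVec_self (N : Matrix n n ℝ) :
    Continuous fun v : n → ℝ => v ⬝ᵥ N *ᵥ v := by
  fun_prop

lemma PosDef.exists_pos_mul_sq_norm_le {M : Matrix n n ℝ} (hM : M.PosDef) :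
    ∃ c > 0, ∀ v : n → ℝ, c * ‖v‖ ^ 2 ≤ v ⬝ᵥ M *ᵥ v := by
  obtain ⟨c, hc, hsphere⟩ := (isCompact_sphere (0 : n → ℝ) 1).exists_forall_le'
    (continuous_dotProduct_mulVec_self M).continuousOn (a := 0) fun u hu => by
      simpa using hM.dotProduct_mulVec_pos (ne_zero_of_mem_unit_sphere ⟨u, hu⟩)
  refine ⟨c, hc, fun v => ?_⟩
  rcases eq_or_ne v 0 with rfl | hv
  · simp
  have hnorm : 0 < ‖v‖ := norm_pos_iff.mpr hv
  have hu : ‖v‖⁻¹ • v ∈ Metric.sphere (0 : n → ℝ) 1 := by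
    simp [norm_smul, hnorm.ne']
  have h := hsphere _ hu
  rw [smul_dotProduct_mulVec_smul, inv_pow, ← div_eq_inv_mul,
    le_div_iff₀ (by positivity)] at h
  linarith

lemma PosDef.tendsto_dotProduct_mulVec_self_cocompact {M : Matrix n n ℝ} (hM : M.PosDef) :
    Tendsto (fun v : n → ℝ => v ⬝ᵥ M *ᵥ v) (cocompact _) atTop := by
  obtain ⟨c, hc, hcoer⟩ := hM.exists_pos_mul_sq_norm_le
  refine tendsto_atTop_mono hcoer (Tendsto.const_mul_atTop hc ?_)
  exact (tendsto_pow_atTop two_ne_zero).comp tendsto_norm_cocompact_atTop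

lemma PosDef.exists_isMinOn_dotProduct_mulVec_self {M : Matrix n n ℝ} (hM : M.PosDef)
    {s : Set (n → ℝ)} (hs : IsClosed s) (hne : s.Nonempty) :
    ∃ v ∈ s, IsMinOn (fun v => v ⬝ᵥ M *ᵥ v) s v := by
  obtain ⟨v₀, hv₀⟩ := hne
  refine (continuous_dotProduct_mulVec_self M).continuousOn.exists_isMinOn' hs hv₀ ?_
  exact (hM.tendsto_dotProduct_mulVec_self_cocompact.eventually_ge_atTop _).filter_mono
    inf_le_left

lemma posSemidef_sub_smul_of_isMinOn {M B : Matrix n n ℝ} (hM : M.PosSemidef)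
    (hB : B.IsHermitian) {v : n → ℝ}
    (hmin : IsMinOn (fun w => w ⬝ᵥ M *ᵥ w) {w | w ⬝ᵥ B *ᵥ w = 1} v) :
    (M - (v ⬝ᵥ M *ᵥ v) • B).PosSemidef := by
  set η := v ⬝ᵥ M *ᵥ v
  have hη : 0 ≤ η := by simpa using hM.dotProduct_mulVec_nonneg v
  refine .of_dotProduct_mulVec_nonneg (hM.isHermitian.sub (hB.smul rfl)) fun w => ?_
  have hMw : 0 ≤ w ⬝ᵥ M *ᵥ w := by simpa using hM.dotProduct_mulVec_nonneg w
  suffices η * (w ⬝ᵥ B *ᵥ w) ≤ w ⬝ᵥ M *ᵥ w by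
    simpa [sub_mulVec, smul_mulVec, dotProduct_sub] using this
  rcases le_or_gt (w ⬝ᵥ B *ᵥ w) 0 with hBw | hBw
  · nlinarith
  set r := √(w ⬝ᵥ B *ᵥ w)
  have hr : r ^ 2 = w ⬝ᵥ B *ᵥ w := Real.sq_sqrt hBw.le
  have h := isMinOn_iff.mp hmin (r⁻¹ • w) (by
    rw [Set.mem_ofPred_eq, smul_dotProduct_mulVec_smul, inv_pow, hr, inv_mul_cancel₀ hBw.ne'])
  rwa [smul_dotProduct_mulVec_smul, inv_pow, ← div_eq_inv_mul, le_div_iff₀ (by positivity),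
    hr] at h

lemma mulVec_eq_smul_mulVec_of_posSemidef_sub {M B : Matrix n n ℝ} {η : ℝ}
    (hpsd : (M - η • B).PosSemidef) {v : n → ℝ} (hB : v ⬝ᵥ B *ᵥ v = 1)
    (hM : v ⬝ᵥ M *ᵥ v = η) : M *ᵥ v = η • B *ᵥ v := by
  have hzero : star v ⬝ᵥ (M - η • B) *ᵥ v = 0 := by
    simp [sub_mulVec, smul_mulVec, dotProduct_sub, hB, hM]
  rw [← sub_eq_zero, ← smul_mulVec, ← sub_mulVec]
  exact (hpsd.dotProduct_mulVec_zero_iff v).mp hzero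

lemma le_of_det_sub_smul_eq_zero [DecidableEq n] {M B : Matrix n n ℝ} (hM : M.PosDef)
    {η η' : ℝ} (hpsd : (M - η • B).PosSemidef) (hη' : 0 < η')
    (hdet : (M - η' • B).det = 0) :
    η ≤ η' := by
  obtain ⟨w, hw, hker⟩ := exists_mulVec_eq_zero_iff.mpr hdet
  have hMw : w ⬝ᵥ M *ᵥ w = η' * (w ⬝ᵥ B *ᵥ w) := by
    rw [sub_mulVec, smul_mulVec, sub_eq_zero] at hker
    rw [hker, dotProduct_smul, smul_eq_mul]
  have hpos : 0 < w ⬝ᵥ M *ᵥ w := by simpa using hM.dotProduct_mulVec_pos hw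
  have hBw : 0 < w ⬝ᵥ B *ᵥ w := pos_of_mul_pos_right (hMw ▸ hpos) hη'.le
  have hη : 0 ≤ (η' - η) * (w ⬝ᵥ B *ᵥ w) := by
    have := hpsd.dotProduct_mulVec_nonneg w
    simp only [star_trivial, sub_mulVec, smul_mulVec, dotProduct_sub, dotProduct_smul,
      smul_eq_mul, hMw] at this
    linarith
  exact sub_nonneg.mp (nonneg_of_mul_nonneg_left hη hBw)

end Matrix

lemma prattB_isHermitian : prattB.IsHermitian := by
  ext i j
  fin_cases i <;> fin_cases j <;> simp [prattB]

lemma exists_dotProduct_prattB_mulVec_eq_one :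
    ({v | v ⬝ᵥ prattB *ᵥ v = 1} : Set (Fin 4 → ℝ)).Nonempty :=
  ⟨![0, 1, 0, 0], by simp [prattB, mulVec, dotProduct, Fin.sum_univ_four]⟩

/-- For a symmetric positive definite 4×4 matrix `M`, the minimum of
`AᵀMA` over `{A : AᵀBA = 1}` is attained, its value is the smallest positive root
`η*` of `det(M - ηB) = 0`, and any minimizer `A` satisfies `MA = η* BA`. -/
theorem stmt_18 (M : Matrix (Fin 4) (Fin 4) ℝ) (hM : M.PosDef) :
    ∃ ηs : ℝ, IsLeast {η : ℝ | 0 < η ∧ (M - η • prattB).det = 0} ηs ∧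
      (∃ v : Fin 4 → ℝ, v ⬝ᵥ prattB.mulVec v = 1 ∧ v ⬝ᵥ M.mulVec v = ηs ∧
        ∀ w : Fin 4 → ℝ, w ⬝ᵥ prattB.mulVec w = 1 →
          v ⬝ᵥ M.mulVec v ≤ w ⬝ᵥ M.mulVec w) ∧
      (∀ v : Fin 4 → ℝ, v ⬝ᵥ prattB.mulVec v = 1 →
        (∀ w : Fin 4 → ℝ, w ⬝ᵥ prattB.mulVec w = 1 →
          v ⬝ᵥ M.mulVec v ≤ w ⬝ᵥ M.mulVec w) →
        M.mulVec v = ηs • prattB.mulVec v ∧ v ⬝ᵥ M.mulVec v = ηs) := by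
  obtain ⟨v, hv, hmin⟩ := hM.exists_isMinOn_dotProduct_mulVec_self
    (isClosed_eq (continuous_dotProduct_mulVec_self prattB) continuous_const)
    exists_dotProduct_prattB_mulVec_eq_one
  set η := v ⬝ᵥ M *ᵥ v
  have hpsd := posSemidef_sub_smul_of_isMinOn hM.posSemidef prattB_isHermitian hmin
  have hv0 : v ≠ 0 := by rintro rfl; simp at hv
  have hη : 0 < η := by simpa using hM.dotProduct_mulVec_pos hv0
  have hdet : (M - η • prattB).det = 0 := by
    refine exists_mulVec_eq_zero_iff.mp ⟨v, hv0, ?_⟩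
    rw [sub_mulVec, smul_mulVec, mulVec_eq_smul_mulVec_of_posSemidef_sub hpsd hv rfl, sub_self]
  refine ⟨η, ⟨⟨hη, hdet⟩, fun η' ⟨hη', hdet'⟩ =>
    le_of_det_sub_smul_eq_zero hM hpsd hη' hdet'⟩,
    ⟨v, hv, rfl, isMinOn_iff.mp hmin⟩, fun v' hv' hmin' => ?_⟩
  have hval : v' ⬝ᵥ M *ᵥ v' = η := le_antisymm (hmin' v hv) (isMinOn_iff.mp hmin v' hv')
  exact ⟨mulVec_eq_smul_mulVec_of_posSemidef_sub hpsd hv' hval, hval⟩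
end
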